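/- arXiv:2201.02706 — 2 statements merged into one kernel-verified Lean document; each statement's English description precedes it below -/
import Mathlib

section
/- Let A be an irreducible nonnegative integer matrix indexed by a finite set of size e, with a positive eigenvector (w_i) of eigenvalue λ > 1. If A, viewed as the adjacency matrix of a directed graph G, has at least 2N + e edges (counted with multiplicity, i.e., the sum of all entries of A is at least 2N + e), then N ≤ (λ^e − 1)/2. -/
open scoped BigOperators

/-- Let `A` be an irreducible nonnegative integer matrix on a finite index set of size `e`,
with a positive eigenvector `w` of eigenvalue `λ > 1`. If the associated directed graph
has at least `2N + e` edges (sum of all entries of `A`), then `N ≤ (λ^e − 1)/2`. -/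
theorem stmt_5 {V : Type*} [Fintype V] [DecidableEq V] [Nonempty V]
    (A : Matrix V V ℕ) (N : ℕ) (lam : ℝ) (w : V → ℝ)
    (hirr : ∀ v u : V, ∃ n : ℕ, 0 < n ∧ 0 < (A ^ n) u v)
    (hpos : ∀ v, 0 < w v) (hlam : 1 < lam)
    (heig : (A.map (Nat.cast : ℕ → ℝ)).mulVec w = lam • w)
    (hedges : 2 * N + Fintype.card V ≤ ∑ v : V, ∑ u : V, A v u) :
    (N : ℝ) ≤ (lam ^ (Fintype.card V) - 1) / 2 := by
  classical
  set e := Fintype.card V with he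
  -- every row sum is at least 1
  have hrow : ∀ x : V, 1 ≤ ∑ u, A x u := by
    intro x
    obtain ⟨n, hn, hpos'⟩ := hirr x x
    obtain ⟨m, rfl⟩ := Nat.exists_eq_succ_of_ne_zero hn.ne'
    rw [pow_succ', Matrix.mul_apply] at hpos'
    have : ∃ z, A x z * (A ^ m) z x ≠ 0 := by
      by_contra h
      push_neg at h
      rw [Finset.sum_eq_zero (fun z _ => h z)] at hpos'
      exact absurd hpos' (lt_irrefl 0)
    obtain ⟨z, hz⟩ := this
    have hz1 : 1 ≤ A x z := Nat.one_le_iff_ne_zero.mpr (fun h0 => hz (by simp [h0]))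
    calc 1 ≤ A x z := hz1
      _ ≤ ∑ u, A x u := Finset.single_le_sum (fun u _ => Nat.zero_le _) (Finset.mem_univ z)
  -- minimizing vertex
  obtain ⟨i, -, hi⟩ := Finset.exists_min_image (Finset.univ : Finset V) w
    ⟨Classical.arbitrary V, Finset.mem_univ _⟩
  -- distance to i
  have hex : ∀ x : V, ∃ n : ℕ, 0 < (A ^ n) i x := by
    intro x
    obtain ⟨n, -, h⟩ := hirr x i
    exact ⟨n, h⟩
  let d : V → ℕ := fun x => Nat.find (hex x)
  have hdspec : ∀ x, 0 < (A ^ (d x)) i x := fun x => Nat.find_spec (hex x)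
  have hdmin : ∀ x n, 0 < (A ^ n) i x → d x ≤ n := fun x n h => Nat.find_min' (hex x) h
  -- all distances below d x are attained
  have hattain : ∀ n, ∀ x, d x = n → ∀ k, k ≤ n → ∃ z, d z = k := by
    intro n
    induction n with
    | zero =>
      intro x hx k hk
      exact ⟨x, by omega⟩
    | succ n ih =>
      intro x hx k hk
      rcases Nat.eq_or_lt_of_le hk with rfl | hk'
      · exact ⟨x, hx⟩
      · have h1 : 0 < (A ^ (n + 1)) i x := hx ▸ hdspec x
        rw [pow_succ, Matrix.mul_apply] at h1
        have : ∃ z, (A ^ n) i z * A z x ≠ 0 := by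
          by_contra h
          push_neg at h
          rw [Finset.sum_eq_zero (fun z _ => h z)] at h1
          exact absurd h1 (lt_irrefl 0)
        obtain ⟨z, hz⟩ := this
        have hz1 : 0 < (A ^ n) i z := Nat.pos_of_ne_zero (fun h0 => hz (by simp [h0]))
        have hz2 : 0 < A z x := Nat.pos_of_ne_zero (fun h0 => hz (by simp [h0]))
        have hdz : d z ≤ n := hdmin z n hz1
        have hdx2 : d x ≤ d z + 1 := by
          apply hdmin
          rw [pow_succ, Matrix.mul_apply]
          calc 0 < (A ^ (d z)) i z * A z x := Nat.mul_pos (hdspec z) hz2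
            _ ≤ ∑ y, (A ^ (d z)) i y * A y x :=
              Finset.single_le_sum (f := fun y => (A ^ (d z)) i y * A y x)
                (fun y _ => Nat.zero_le _) (Finset.mem_univ z)
        have hdzn : d z = n := by omega
        exact ih z hdzn k (Nat.lt_succ_iff.mp hk')
  -- distances are < e
  have hdlt : ∀ x, d x < e := by
    intro x
    by_contra h
    push_neg at h
    have hall : ∀ k : ℕ, k ≤ d x → ∃ z, d z = k := hattain (d x) x rfl
    choose f hf using hall
    have hinj : Function.Injective (fun k : Fin (d x + 1) =>
        f k.1 (Nat.lt_succ_iff.mp k.2)) := by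
      intro a b hab
      have h2 : d (f a.1 (Nat.lt_succ_iff.mp a.2)) = d (f b.1 (Nat.lt_succ_iff.mp b.2)) :=
        congrArg d hab
      rw [hf, hf] at h2
      exact Fin.ext h2
    have := Fintype.card_le_of_injective _ hinj
    simp only [Fintype.card_fin] at this
    omega
  -- key inductive counting bound
  have key : ∀ k : ℕ,
      (∑ x ∈ Finset.univ.filter (fun x => d x < k), (∑ u, A x u - 1)) + 1
        ≤ ∑ j, (A ^ k) i j := by
    intro k
    induction k with
    | zero =>
      simp [Matrix.one_apply]
    | succ k ih =>
      have hsplit : Finset.univ.filter (fun x => d x < k + 1)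
          = Finset.univ.filter (fun x => d x < k) ∪ Finset.univ.filter (fun x => d x = k) := by
        ext x
        simp only [Finset.mem_filter, Finset.mem_union, Finset.mem_univ, true_and]
        omega
      have hdisj : Disjoint (Finset.univ.filter (fun x => d x < k))
          (Finset.univ.filter (fun x => d x = k)) := by
        rw [Finset.disjoint_left]
        intro x h1 h2
        simp only [Finset.mem_filter, Finset.mem_univ, true_and] at h1 h2
        omega
      have hRHS : ∑ j, (A ^ (k + 1)) i j = ∑ u, (A ^ k) i u * (∑ j, A u j) := by
        simp only [pow_succ, Matrix.mul_apply]
        rw [Finset.sum_comm]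
        simp [Finset.mul_sum]
      have hsplitterm : ∀ u : V, (A ^ k) i u * (∑ j, A u j)
          = (A ^ k) i u * ((∑ j, A u j) - 1) + (A ^ k) i u := by
        intro u
        conv_lhs => rw [show (∑ j, A u j) = ((∑ j, A u j) - 1) + 1 from
          (Nat.sub_add_cancel (hrow u)).symm]
        rw [Nat.mul_add, Nat.mul_one]
      have hP : ∑ x ∈ Finset.univ.filter (fun x => d x = k), (∑ u, A x u - 1)
          ≤ ∑ u, (A ^ k) i u * ((∑ j, A u j) - 1) := by
        calc ∑ x ∈ Finset.univ.filter (fun x => d x = k), (∑ u, A x u - 1)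
            ≤ ∑ x ∈ Finset.univ.filter (fun x => d x = k),
              (A ^ k) i x * ((∑ u, A x u) - 1) := by
              apply Finset.sum_le_sum
              intro x hx
              simp only [Finset.mem_filter, Finset.mem_univ, true_and] at hx
              have : 0 < (A ^ k) i x := hx ▸ hdspec x
              exact Nat.le_mul_of_pos_left _ this
          _ ≤ ∑ u, (A ^ k) i u * ((∑ j, A u j) - 1) :=
              Finset.sum_le_sum_of_subset (Finset.filter_subset _ _)
      calc (∑ x ∈ Finset.univ.filter (fun x => d x < k + 1), (∑ u, A x u - 1)) + 1
          = (∑ x ∈ Finset.univ.filter (fun x => d x < k), (∑ u, A x u - 1))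
            + (∑ x ∈ Finset.univ.filter (fun x => d x = k), (∑ u, A x u - 1)) + 1 := by
            rw [hsplit, Finset.sum_union hdisj]
        _ ≤ (∑ u, (A ^ k) i u * ((∑ j, A u j) - 1)) + ∑ j, (A ^ k) i j := by
            have := hP
            omega
        _ = ∑ u, (A ^ k) i u * (∑ j, A u j) := by
            rw [← Finset.sum_add_distrib]
            exact Finset.sum_congr rfl (fun u _ => (hsplitterm u).symm)
        _ = ∑ j, (A ^ (k + 1)) i j := hRHS.symm
  -- from key at k = e : the e-step row sum at i is at least 2N+1
  have hS : 2 * N + 1 ≤ ∑ j, (A ^ e) i j := by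
    have hfull : Finset.univ.filter (fun x => d x < e) = (Finset.univ : Finset V) :=
      Finset.filter_true_of_mem (fun x _ => hdlt x)
    have hsum : (∑ x : V, (∑ u, A x u - 1)) + e = ∑ x : V, ∑ u, A x u := by
      rw [← Finset.sum_congr rfl (fun x (_ : x ∈ Finset.univ) =>
        (Nat.sub_add_cancel (hrow x)))]
      rw [Finset.sum_add_distrib]
      simp [he]
    have hkey := key e
    rw [hfull] at hkey
    omega
  -- eigenvector equation, componentwise
  have heig' : ∀ u : V, ∑ j, (A u j : ℝ) * w j = lam * w u := by
    intro u
    have := congrFun heig u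
    simpa [Matrix.mulVec, dotProduct, Matrix.map_apply] using this
  have heigpow : ∀ k : ℕ, ∀ x : V, ∑ j, ((A ^ k) x j : ℝ) * w j = lam ^ k * w x := by
    intro k
    induction k with
    | zero =>
      intro x
      simp [Matrix.one_apply, Finset.sum_ite_eq]
    | succ k ih =>
      intro x
      have hstep : ∑ j, ((A ^ (k + 1)) x j : ℝ) * w j
          = ∑ u, ((A ^ k) x u : ℝ) * ∑ j, (A u j : ℝ) * w j := by
        calc ∑ j, ((A ^ (k + 1)) x j : ℝ) * w j
            = ∑ j, ∑ u, ((A ^ k) x u : ℝ) * ((A u j : ℝ) * w j) := by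
              simp only [pow_succ, Matrix.mul_apply]
              push_cast
              exact Finset.sum_congr rfl (fun j _ => by
                rw [Finset.sum_mul]
                exact Finset.sum_congr rfl (fun u _ => by ring))
          _ = ∑ u, ∑ j, ((A ^ k) x u : ℝ) * ((A u j : ℝ) * w j) := Finset.sum_comm
          _ = ∑ u, ((A ^ k) x u : ℝ) * ∑ j, (A u j : ℝ) * w j := by
              exact Finset.sum_congr rfl (fun u _ => (Finset.mul_sum _ _ _).symm)
      rw [hstep]
      calc ∑ u, ((A ^ k) x u : ℝ) * ∑ j, (A u j : ℝ) * w j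
          = ∑ u, ((A ^ k) x u : ℝ) * (lam * w u) := by
            exact Finset.sum_congr rfl (fun u _ => by rw [heig' u])
        _ = lam * ∑ u, ((A ^ k) x u : ℝ) * w u := by
            rw [Finset.mul_sum]; exact Finset.sum_congr rfl (fun u _ => by ring)
        _ = lam * (lam ^ k * w x) := by rw [ih x]
        _ = lam ^ (k + 1) * w x := by ring
  -- conclude
  have hmain : ((2 * N + 1 : ℕ) : ℝ) * w i ≤ lam ^ e * w i := by
    calc ((2 * N + 1 : ℕ) : ℝ) * w i
        ≤ ((∑ j, (A ^ e) i j : ℕ) : ℝ) * w i := by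
          apply mul_le_mul_of_nonneg_right _ (hpos i).le
          exact_mod_cast hS
      _ = ∑ j, ((A ^ e) i j : ℝ) * w i := by
          push_cast
          rw [Finset.sum_mul]
      _ ≤ ∑ j, ((A ^ e) i j : ℝ) * w j := by
          apply Finset.sum_le_sum
          intro j _
          exact mul_le_mul_of_nonneg_left (hi j (Finset.mem_univ j)) (Nat.cast_nonneg _)
      _ = lam ^ e * w i := heigpow e i
  have hfin : ((2 * N + 1 : ℕ) : ℝ) ≤ lam ^ e :=
    le_of_mul_le_mul_right hmain (hpos i)
  have : (2 * (N : ℝ) + 1) ≤ lam ^ e := by push_cast at hfin; linarith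
  linarith
end

section
/- Let A be an irreducible nonnegative matrix with positive eigenvector (w_i) of eigenvalue λ > 1, on a strongly connected directed graph G with e' vertices. Suppose there is a vertex i and a length L ≥ 1 such that (A^L)_{ii} ≥ 1 and additionally there exist two distinct directed paths of length L ending at i other than the cycle through i, starting at vertices j and k. Then λ^L ≥ 2 λ^{−e'} + 1. -/
/-- Let `A` be an irreducible nonnegative integer matrix (strongly connected graph on
`e'` vertices, diameter `≤ e'`) with positive eigenvector `w` of eigenvalue `λ > 1`.
Suppose there is a vertex `i` and a length `L ≥ 1` such that `(A^L)_{ii} ≥ 1` (a cycle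
through `i`), and two further directed paths of length `L` ending at `i`, distinct from
each other and from the cycle, starting at `j` and `k`. Then `λ^L ≥ 2 λ^{-e'} + 1`. -/
theorem stmt_7 {V : Type*} [Fintype V] [DecidableEq V]
    (A : Matrix V V ℕ) (lam : ℝ) (w : V → ℝ) (i j k : V) (L : ℕ)
    (hpos : ∀ v, 0 < w v) (hlam : 1 < lam)
    (heig : (A.map (Nat.cast : ℕ → ℝ)).mulVec w = lam • w)
    (hdiam : ∀ a b : V, ∃ n : ℕ, 0 < n ∧ n ≤ Fintype.card V ∧ 0 < (A ^ n) a b)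
    (hL : 1 ≤ L)
    (hcyc : 1 ≤ (A ^ L) i i)
    (hj : 1 + (if j = i then 1 else 0) ≤ (A ^ L) i j)
    (hk : 1 + (if k = i then 1 else 0) + (if k = j then 1 else 0) ≤ (A ^ L) i k) :
    2 * lam ^ (-(Fintype.card V : ℤ)) + 1 ≤ lam ^ L := by
  have hlam0 : (0:ℝ) < lam := lt_trans one_pos hlam
  -- eigenvector for powers
  have hmap : ∀ n : ℕ, (A ^ n).map (Nat.cast : ℕ → ℝ) = (A.map (Nat.cast : ℕ → ℝ)) ^ n := by
    intro n
    have := map_pow ((Nat.castRingHom ℝ).mapMatrix) A n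
    simpa [RingHom.mapMatrix_apply] using this
  have heign : ∀ n : ℕ, ((A ^ n).map (Nat.cast : ℕ → ℝ)).mulVec w = (lam ^ n) • w := by
    intro n
    induction n with
    | zero => simp [Matrix.map_one]
    | succ n ih =>
      rw [hmap] at ih ⊢
      rw [pow_succ, ← Matrix.mulVec_mulVec, heig, Matrix.mulVec_smul, ih, smul_smul,
        ← pow_succ']
  have hcomp : ∀ n : ℕ, ∀ a : V, (∑ b, ((A ^ n) a b : ℝ) * w b) = lam ^ n * w a := by
    intro n a
    have := congrFun (heign n) a
    simpa [Matrix.mulVec, dotProduct, Matrix.map_apply, mul_comm] using this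
  -- lower bound on components: w b ≤ lam^n * w a when (A^n) a b > 0
  have hbound : ∀ a : V, lam ^ (-(Fintype.card V : ℤ)) * w i ≤ w a := by
    intro a
    obtain ⟨n, hn0, hnle, hpos'⟩ := hdiam a i
    have h1 : w i ≤ lam ^ n * w a := by
      rw [← hcomp n a]
      calc w i = (1:ℝ) * w i := (one_mul _).symm
        _ ≤ ((A ^ n) a i : ℝ) * w i := by
            apply mul_le_mul_of_nonneg_right _ (hpos i).le
            exact_mod_cast hpos'
        _ ≤ ∑ b, ((A ^ n) a b : ℝ) * w b := by
            apply Finset.single_le_sum (f := fun b => ((A ^ n) a b : ℝ) * w b)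
            · intro b _
              exact mul_nonneg (Nat.cast_nonneg _) (hpos b).le
            · exact Finset.mem_univ i
    have h2 : lam ^ n ≤ lam ^ (Fintype.card V) := pow_le_pow_right₀ hlam.le hnle
    have h3 : w i ≤ lam ^ (Fintype.card V) * w a := by
      calc w i ≤ lam ^ n * w a := h1
        _ ≤ lam ^ (Fintype.card V) * w a :=
            mul_le_mul_of_nonneg_right h2 (hpos a).le
    rw [zpow_neg, zpow_natCast]
    rw [inv_mul_le_iff₀ (pow_pos hlam0 _)]
    linarith [h3]
  -- pointwise nat inequality
  have hpt : ∀ b : V, ((if b = i then 1 else 0) + (if b = j then 1 else 0)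
      + (if b = k then 1 else 0) : ℕ) ≤ (A ^ L) i b := by
    intro b
    by_cases hbi : b = i <;> by_cases hbj : b = j <;> by_cases hbk : b = k <;>
      simp_all <;> omega
  -- main sum bound
  have hmain : w i + w j + w k ≤ lam ^ L * w i := by
    rw [← hcomp L i]
    have hsum : (∑ b, (((if b = i then 1 else 0) + (if b = j then 1 else 0)
        + (if b = k then 1 else 0) : ℕ) : ℝ) * w b) = w i + w j + w k := by
      push_cast
      simp only [add_mul]
      rw [Finset.sum_add_distrib, Finset.sum_add_distrib]
      congr 1
      · congr 1
        · simp [ite_mul]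
        · simp [ite_mul]
      · simp [ite_mul]
    rw [← hsum]
    apply Finset.sum_le_sum
    intro b _
    apply mul_le_mul_of_nonneg_right _ (hpos b).le
    exact_mod_cast hpt b
  -- conclude
  have hwipos := hpos i
  have h1 : lam ^ (-(Fintype.card V : ℤ)) * w i ≤ w j := hbound j
  have h2 : lam ^ (-(Fintype.card V : ℤ)) * w i ≤ w k := hbound k
  have : (2 * lam ^ (-(Fintype.card V : ℤ)) + 1) * w i ≤ lam ^ L * w i := by
    nlinarith [hmain, h1, h2]
  exact le_of_mul_le_mul_right (by linarith) hwipos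
end
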